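/- Let n, u be smooth bounded functions on ℝ^d (n scalar, positive and bounded below by n̲ > 0; u vector-valued), with bounded first derivatives, and let h be smooth with h' > 0. With A⁰(n) = diag(h'(n), n I_d) and W = (N, U) ∈ L²(ℝ^d; ℝ^{d+1}) smooth and decaying, one has ⟨∂_{x_j}(A⁰(n)A^j(n,u)) W, W⟩_{L²} summed over j equals at most C‖W‖²_{L²} + 2⟨N ∇(p'(n)), U⟩_{L²}, where p'(n) = n h'(n) and C depends on the W^{1,∞} norms of n and u. -/

import Mathlib

open MeasureTheory
open scoped BigOperators

noncomputable section

variable {d : ℕ}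

/-- The symmetrizer `A⁰(n) = diag(h'(n), n I_d)`. -/
def A0 (d : ℕ) (hn nv : ℝ) : Matrix (Fin (d + 1)) (Fin (d + 1)) ℝ :=
  Matrix.diagonal (fun k => if k = 0 then hn else nv)

/-- The coefficient matrix `A^j(n,u) = [[u_j, n e_jᵀ],[h'(n) e_j, u_j I_d]]`. -/
def Amat (d : ℕ) (hn nv uj : ℝ) (j : Fin d) : Matrix (Fin (d + 1)) (Fin (d + 1)) ℝ :=
  Matrix.of fun k l =>
    if k = 0 then (if l = 0 then uj else if l = j.succ then nv else 0)
    else if l = 0 then (if k = j.succ then hn else 0)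
    else if k = l then uj else 0

/-- Entrywise partial derivative in direction `j` of a matrix-valued field. -/
def matPDeriv (j : Fin d)
    (M : EuclideanSpace ℝ (Fin d) → Matrix (Fin (d + 1)) (Fin (d + 1)) ℝ)
    (x : EuclideanSpace ℝ (Fin d)) : Matrix (Fin (d + 1)) (Fin (d + 1)) ℝ :=
  Matrix.of fun k l => fderiv ℝ (fun y => M y k l) x (EuclideanSpace.single j 1)

/-- The state vector `W = (N, U)` as a function with values in `ℝ^{d+1}`. -/
def Wvec (N : EuclideanSpace ℝ (Fin d) → ℝ)
    (U : EuclideanSpace ℝ (Fin d) → EuclideanSpace ℝ (Fin d))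
    (x : EuclideanSpace ℝ (Fin d)) : Fin (d + 1) → ℝ :=
  Fin.cons (N x) (fun i => U x i)

/- ### Auxiliary lemmas -/

lemma coord_abs_le (v : EuclideanSpace ℝ (Fin d)) (i : Fin d) : |v i| ≤ ‖v‖ := by
  have h := abs_real_inner_le_norm (EuclideanSpace.single i (1:ℝ)) v
  simpa [EuclideanSpace.inner_single_left, EuclideanSpace.norm_single] using h

lemma euclid_decomp (v : EuclideanSpace ℝ (Fin d)) :
    ∑ i, v i • EuclideanSpace.single i (1:ℝ) = v := by
  have h := (EuclideanSpace.basisFun (Fin d) ℝ).sum_repr v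
  simpa [EuclideanSpace.basisFun_repr, EuclideanSpace.basisFun_apply] using h

lemma dot_formula (a b c N : ℝ) (U : Fin d → ℝ) (j : Fin d) :
    dotProduct
      ((Matrix.of fun k l : Fin (d+1) =>
          if k = 0 then (if l = 0 then a else if l = j.succ then c else 0)
          else if l = 0 then (if k = j.succ then c else 0)
          else if k = l then b else 0).mulVec (Fin.cons N U))
      (Fin.cons N U)
    = a * N ^ 2 + 2 * c * N * U j + b * ∑ i, U i ^ 2 := by
  simp only [dotProduct, Matrix.mulVec, Matrix.of_apply, Fin.sum_univ_succ,
    Fin.cons_zero, Fin.cons_succ, Fin.succ_ne_zero, if_false, if_true, eq_self_iff_true,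
    Fin.succ_inj, ite_mul, zero_mul, Finset.sum_ite_eq', Finset.mem_univ, if_pos]
  simp only [Finset.sum_ite_eq, Finset.mem_univ, if_pos, if_true, add_mul, ite_mul, zero_mul,
    Finset.sum_add_distrib, Finset.sum_ite_eq', Finset.mul_sum]
  ring_nf

lemma entry_formula (hn nv uj : ℝ) (j : Fin d) (k l : Fin (d+1)) :
    (A0 d hn nv * Amat d hn nv uj j) k l =
    (if k = 0 then (if l = 0 then hn * uj else if l = j.succ then hn * nv else 0)
     else if l = 0 then (if k = j.succ then nv * hn else 0)
     else if k = l then nv * uj else 0) := by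
  rw [A0, Matrix.diagonal_mul]
  simp only [Amat, Matrix.of_apply]
  by_cases hk : k = 0 <;> by_cases hl : l = 0 <;>
    simp [hk, hl, mul_ite, mul_zero]

lemma matPDeriv_formula (j : Fin d) (nf φf ujf : EuclideanSpace ℝ (Fin d) → ℝ)
    (x : EuclideanSpace ℝ (Fin d)) :
    matPDeriv j (fun y => A0 d (φf y) (nf y) * Amat d (φf y) (nf y) (ujf y) j) x
    = Matrix.of fun k l =>
        if k = 0 then
          (if l = 0 then fderiv ℝ (fun y => φf y * ujf y) x (EuclideanSpace.single j 1)
           else if l = j.succ then fderiv ℝ (fun y => nf y * φf y) x (EuclideanSpace.single j 1)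
           else 0)
        else if l = 0 then
          (if k = j.succ then fderiv ℝ (fun y => nf y * φf y) x (EuclideanSpace.single j 1) else 0)
        else if k = l then fderiv ℝ (fun y => nf y * ujf y) x (EuclideanSpace.single j 1)
        else 0 := by
  ext k l
  show fderiv ℝ (fun y => (A0 d (φf y) (nf y) * Amat d (φf y) (nf y) (ujf y) j) k l) x _ = _
  have he : (fun y => (A0 d (φf y) (nf y) * Amat d (φf y) (nf y) (ujf y) j) k l)
      = fun y => (if k = 0 then (if l = 0 then φf y * ujf y else if l = j.succ then φf y * nf y
          else 0)
        else if l = 0 then (if k = j.succ then nf y * φf y else 0)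
        else if k = l then nf y * ujf y else 0) :=
    funext fun y => entry_formula _ _ _ _ _ _
  rw [he]
  have hc : (fun y => φf y * nf y) = fun y => nf y * φf y := funext fun y => mul_comm _ _
  by_cases hk : k = 0
  · by_cases hl : l = 0
    · simp [hk, hl]
    · by_cases hlj : l = j.succ <;> simp [hk, hl, hlj, hc, Fin.succ_ne_zero]
  · by_cases hl : l = 0
    · by_cases hkj : k = j.succ <;> simp [hk, hl, hkj, Fin.succ_ne_zero]
    · by_cases hkl : k = l <;> simp [hk, hl, hkl]

/-- The key divergence estimate (Step 1 of Lemma 3.1):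
`Σ_j ⟨∂_{x_j}(A⁰A^j) W, W⟩_{L²} ≤ C‖W‖²_{L²} + 2⟨N ∇(p'(n)), U⟩_{L²}`
with `p'(n) = n h'(n)` and `C` depending on the `W^{1,∞}` norms of `n` and `u`. -/
theorem symmetrized_divergence_estimate
    (n : EuclideanSpace ℝ (Fin d) → ℝ)
    (u : EuclideanSpace ℝ (Fin d) → EuclideanSpace ℝ (Fin d))
    (h : ℝ → ℝ) (nLB B : ℝ) (hnLB : 0 < nLB)
    (hn : ContDiff ℝ (⊤ : ℕ∞) n) (hu : ContDiff ℝ (⊤ : ℕ∞) u)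
    (hh : ContDiffOn ℝ (⊤ : ℕ∞) h (Set.Ioi 0))
    (hh' : ∀ y : ℝ, 0 < y → 0 < deriv h y)
    (hlow : ∀ x, nLB ≤ n x)
    (hbdd : ∀ x, |n x| ≤ B ∧ ‖u x‖ ≤ B ∧ ‖fderiv ℝ n x‖ ≤ B ∧ ‖fderiv ℝ u x‖ ≤ B) :
    ∃ C : ℝ, 0 < C ∧
      ∀ (N : EuclideanSpace ℝ (Fin d) → ℝ)
        (U : EuclideanSpace ℝ (Fin d) → EuclideanSpace ℝ (Fin d)),
        ContDiff ℝ (⊤ : ℕ∞) N → HasCompactSupport N →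
        ContDiff ℝ (⊤ : ℕ∞) U → HasCompactSupport U →
        ∑ j : Fin d, ∫ x, dotProduct
            ((matPDeriv j
                (fun y => A0 d (deriv h (n y)) (n y) *
                  Amat d (deriv h (n y)) (n y) (u y j) j) x).mulVec (Wvec N U x))
            (Wvec N U x)
          ≤ C * (∫ x, ∑ k : Fin (d + 1), (Wvec N U x k) ^ 2)
            + 2 * ∫ x, N x * (inner ℝ (gradient (fun y => n y * deriv h (n y)) x) (U x) : ℝ) := by
  classical
  -- basic notation
  let e : Fin d → EuclideanSpace ℝ (Fin d) := fun j => EuclideanSpace.single j (1:ℝ)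
  have he1 : ∀ j, ‖e j‖ = 1 := fun j => by simp [e, EuclideanSpace.norm_single]
  let φ : EuclideanSpace ℝ (Fin d) → ℝ := fun x => deriv h (n x)
  let p : EuclideanSpace ℝ (Fin d) → ℝ := fun x => n x * deriv h (n x)
  -- membership and smoothness facts
  have hmem : ∀ x, n x ∈ Set.Ioi (0:ℝ) := fun x => lt_of_lt_of_le hnLB (hlow x)
  have hdh : ContDiffOn ℝ (⊤ : ℕ∞) (deriv h) (Set.Ioi 0) := hh.deriv_of_isOpen isOpen_Ioi (by simp)
  have hddh : ContDiffOn ℝ (⊤ : ℕ∞) (deriv (deriv h)) (Set.Ioi 0) :=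
    hdh.deriv_of_isOpen isOpen_Ioi (by simp)
  have hφ : ContDiff ℝ (⊤ : ℕ∞) φ := hdh.comp_contDiff hn hmem
  have hp : ContDiff ℝ (⊤ : ℕ∞) p := hn.mul hφ
  have huj : ∀ j : Fin d, ContDiff ℝ (⊤ : ℕ∞) (fun x => u x j) := fun j => (contDiff_piLp 2).1 hu j
  -- coefficient functions
  let a : Fin d → EuclideanSpace ℝ (Fin d) → ℝ := fun j x => fderiv ℝ (fun y => φ y * u y j) x (e j)
  let b : Fin d → EuclideanSpace ℝ (Fin d) → ℝ := fun j x => fderiv ℝ (fun y => n y * u y j) x (e j)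
  let c : Fin d → EuclideanSpace ℝ (Fin d) → ℝ := fun j x => fderiv ℝ p x (e j)
  -- bounds
  have hB0 : 0 < B := lt_of_lt_of_le hnLB ((hlow 0).trans ((le_abs_self _).trans (hbdd 0).1))
  have hnx : ∀ x, n x ∈ Set.Icc nLB B := fun x => ⟨hlow x, (le_abs_self _).trans (hbdd x).1⟩
  have hSsub : Set.Icc nLB B ⊆ Set.Ioi (0:ℝ) := fun y hy => lt_of_lt_of_le hnLB hy.1
  obtain ⟨K1, hK1⟩ := isCompact_Icc.exists_bound_of_continuousOn
    ((hdh.continuousOn).mono hSsub)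
  obtain ⟨K2, hK2⟩ := isCompact_Icc.exists_bound_of_continuousOn
    ((hddh.continuousOn).mono hSsub)
  set K : ℝ := max K1 K2 with hKdef
  have hK0 : 0 ≤ K := le_trans (norm_nonneg (deriv h (n 0))) ((hK1 _ (hnx 0)).trans (le_max_left _ _))
  have hKh : ∀ x, |deriv h (n x)| ≤ K := fun x => (hK1 _ (hnx x)).trans (le_max_left _ _)
  have hKhh : ∀ x, |deriv (deriv h) (n x)| ≤ K := fun x => (hK2 _ (hnx x)).trans (le_max_right _ _)
  -- derivative formulas
  have hφfd : ∀ x, fderiv ℝ φ x = deriv (deriv h) (n x) • fderiv ℝ n x := by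
    intro x
    have h1 : DifferentiableAt ℝ (deriv h) (n x) :=
      (hdh.differentiableOn (by simp)).differentiableAt (isOpen_Ioi.mem_nhds (hmem x))
    exact (h1.hasDerivAt.comp_hasFDerivAt x (hn.differentiable (by simp) x).hasFDerivAt).fderiv
  have hujfd : ∀ (j i : Fin d) (x : EuclideanSpace ℝ (Fin d)) (v : EuclideanSpace ℝ (Fin d)),
      fderiv ℝ (fun y => u y i) x v = (fderiv ℝ u x v) i := by
    intro j i x v
    have hcomp := (EuclideanSpace.proj (𝕜 := ℝ) i).hasFDerivAt.comp x
      ((hu.differentiable (by simp) x).hasFDerivAt)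
    have : fderiv ℝ (fun y => u y i) x
        = (EuclideanSpace.proj (𝕜 := ℝ) i).comp (fderiv ℝ u x) := hcomp.fderiv
    rw [this]; rfl
  -- generic bound for applying at the unit vector
  have happ : ∀ (f : EuclideanSpace ℝ (Fin d) → ℝ) (x : EuclideanSpace ℝ (Fin d)) (j : Fin d), |fderiv ℝ f x (e j)| ≤ ‖fderiv ℝ f x‖ := by
    intro f x j
    calc |fderiv ℝ f x (e j)| = ‖fderiv ℝ f x (e j)‖ := rfl
      _ ≤ ‖fderiv ℝ f x‖ * ‖e j‖ := (fderiv ℝ f x).le_opNorm _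
      _ = ‖fderiv ℝ f x‖ := by rw [he1 j, mul_one]
  have hnj : ∀ (x : EuclideanSpace ℝ (Fin d)) (j : Fin d), |fderiv ℝ n x (e j)| ≤ B :=
    fun x j => (happ n x j).trans (hbdd x).2.2.1
  have huij : ∀ (x : EuclideanSpace ℝ (Fin d)) (j i : Fin d), |fderiv ℝ (fun y => u y i) x (e j)| ≤ B := by
    intro x j i
    rw [hujfd j i x (e j)]
    refine (coord_abs_le _ i).trans ?_
    calc ‖fderiv ℝ u x (e j)‖ ≤ ‖fderiv ℝ u x‖ * ‖e j‖ := (fderiv ℝ u x).le_opNorm _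
      _ ≤ B := by rw [he1 j, mul_one]; exact (hbdd x).2.2.2
  -- bounds on coefficients
  have haB : ∀ j x, |a j x| ≤ K * B * B + K * B := by
    intro j x
    have hfd : a j x = (deriv (deriv h) (n x) * fderiv ℝ n x (e j)) * u x j
        + φ x * fderiv ℝ (fun y => u y j) x (e j) := by
      show fderiv ℝ (fun y => φ y * u y j) x (e j) = _
      rw [fderiv_fun_mul (hφ.differentiable (by simp) x) (((huj j)).differentiable (by simp) x)]
      simp only [ContinuousLinearMap.add_apply, ContinuousLinearMap.smul_apply, smul_eq_mul,
        hφfd x]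
      ring
    rw [hfd]
    have h1 : |(deriv (deriv h) (n x) * fderiv ℝ n x (e j)) * u x j| ≤ K * B * B := by
      rw [abs_mul, abs_mul]
      have := (coord_abs_le (u x) j).trans (hbdd x).2.1
      exact mul_le_mul (mul_le_mul (hKhh x) (hnj x j) (abs_nonneg _) hK0)
        this (abs_nonneg _) (by positivity)
    have h2 : |φ x * fderiv ℝ (fun y => u y j) x (e j)| ≤ K * B := by
      rw [abs_mul]
      exact mul_le_mul (hKh x) (huij x j j) (abs_nonneg _) hK0
    exact (abs_add_le _ _).trans (add_le_add h1 h2)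
  have hbB : ∀ j x, |b j x| ≤ B * B + B * B := by
    intro j x
    have hfd : b j x = fderiv ℝ n x (e j) * u x j
        + n x * fderiv ℝ (fun y => u y j) x (e j) := by
      show fderiv ℝ (fun y => n y * u y j) x (e j) = _
      rw [fderiv_fun_mul (hn.differentiable (by simp) x) (((huj j)).differentiable (by simp) x)]
      simp only [ContinuousLinearMap.add_apply, ContinuousLinearMap.smul_apply, smul_eq_mul]
      ring
    rw [hfd]
    have h1 : |fderiv ℝ n x (e j) * u x j| ≤ B * B := by
      rw [abs_mul]
      exact mul_le_mul (hnj x j) ((coord_abs_le (u x) j).trans (hbdd x).2.1) (abs_nonneg _)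
        hB0.le
    have h2 : |n x * fderiv ℝ (fun y => u y j) x (e j)| ≤ B * B := by
      rw [abs_mul]
      exact mul_le_mul (hbdd x).1 (huij x j j) (abs_nonneg _) hB0.le
    exact (abs_add_le _ _).trans (add_le_add h1 h2)
  -- continuity of coefficients
  have hacont : ∀ j, Continuous (a j) := fun j =>
    ((hφ.mul (huj j)).continuous_fderiv (by simp)).clm_apply continuous_const
  have hbcont : ∀ j, Continuous (b j) := fun j =>
    ((hn.mul (huj j)).continuous_fderiv (by simp)).clm_apply continuous_const
  have hccont : ∀ j, Continuous (c j) := fun j =>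
    (hp.continuous_fderiv (by simp)).clm_apply continuous_const
  -- the constant
  set M0 : ℝ := K * B * B + K * B + (B * B + B * B) with hM0def
  have hM0 : 0 ≤ M0 := by positivity
  refine ⟨(d : ℝ) * M0 + 1, by positivity, ?_⟩
  intro N U hN hNs hU hUs
  -- pointwise formula for the integrand
  have hdot : ∀ (j : Fin d) (x : EuclideanSpace ℝ (Fin d)),
      dotProduct
        ((matPDeriv j (fun y => A0 d (deriv h (n y)) (n y) *
            Amat d (deriv h (n y)) (n y) (u y j) j) x).mulVec (Wvec N U x)) (Wvec N U x)
      = a j x * N x ^ 2 + 2 * c j x * N x * U x j + b j x * ∑ i, U x i ^ 2 := by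
    intro j x
    rw [matPDeriv_formula j n φ (fun y => u y j) x]
    exact dot_formula _ _ _ _ _ _
  -- gradient identity
  have hgrad : ∀ x : EuclideanSpace ℝ (Fin d), (inner ℝ (gradient p x) (U x) : ℝ) = ∑ j, c j x * U x j := by
    intro x
    have h1 : (inner ℝ (gradient p x) (U x) : ℝ) = fderiv ℝ p x (U x) :=
      InnerProductSpace.toDual_symm_apply
    have h2 : fderiv ℝ p x (U x) = ∑ j, c j x * U x j := by
      conv_lhs => rw [← euclid_decomp (U x)]
      rw [map_sum]
      exact Finset.sum_congr rfl fun i _ => by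
        simp [c, e, smul_eq_mul, mul_comm]
    rw [h1, h2]
  -- abbreviations
  set S : EuclideanSpace ℝ (Fin d) → ℝ := fun x => ∑ i, U x i ^ 2 with hSdef
  have hUjc : ∀ j : Fin d, Continuous (fun x => U x j) :=
    fun j => ((contDiff_piLp 2).1 hU j).continuous
  have hSc : Continuous S := continuous_finset_sum _ fun i _ => (hUjc i).pow 2
  have hS0 : ∀ x, 0 ≤ S x := fun x => Finset.sum_nonneg fun i _ => sq_nonneg _
  have hWk : ∀ x, ∑ k : Fin (d+1), (Wvec N U x k) ^ 2 = N x ^ 2 + S x := by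
    intro x; rw [Fin.sum_univ_succ]; simp [Wvec, hSdef]
  -- compact supports
  have hN2s : HasCompactSupport (fun x => N x ^ 2) :=
    hNs.comp_left (g := fun t : ℝ => t ^ 2) (by simp)
  have hSs : HasCompactSupport S :=
    hUs.comp_left (g := fun v : EuclideanSpace ℝ (Fin d) => ∑ i, v i ^ 2) (by simp)
  have hUjs : ∀ j : Fin d, HasCompactSupport (fun x => U x j) :=
    fun j => hUs.comp_left (g := fun v : EuclideanSpace ℝ (Fin d) => v j) rfl
  -- integrability
  have int_aN : ∀ j, Integrable (fun x => a j x * N x ^ 2) := fun j =>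
    ((hacont j).mul (hN.continuous.pow 2)).integrable_of_hasCompactSupport hN2s.mul_left
  have int_bS : ∀ j, Integrable (fun x => b j x * S x) := fun j =>
    ((hbcont j).mul hSc).integrable_of_hasCompactSupport hSs.mul_left
  have int_cNU : ∀ j, Integrable (fun x => 2 * c j x * N x * U x j) := fun j =>
    ((((continuous_const.mul (hccont j)).mul hN.continuous).mul (hUjc j)).integrable_of_hasCompactSupport
      (hUjs j).mul_left)
  have int_dot : ∀ j, Integrable
      (fun x => a j x * N x ^ 2 + 2 * c j x * N x * U x j + b j x * S x) :=
    fun j => ((int_aN j).add (int_cNU j)).add (int_bS j)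
  have int_G1 : Integrable (fun x => ∑ j, (a j x * N x ^ 2 + b j x * S x)) :=
    integrable_finset_sum _ fun j _ => (int_aN j).add (int_bS j)
  have int_G2 : Integrable (fun x => N x * (inner ℝ (gradient p x) (U x) : ℝ)) := by
    have heq : (fun x => N x * (inner ℝ (gradient p x) (U x) : ℝ))
        = fun x => N x * ∑ j, c j x * U x j := funext fun x => by rw [hgrad x]
    rw [heq]
    exact (hN.continuous.mul (continuous_finset_sum _ fun j _ =>
      (hccont j).mul (hUjc j))).integrable_of_hasCompactSupport hNs.mul_right
  have int_dom : Integrable (fun x => ((d : ℝ) * M0) * (N x ^ 2 + S x)) :=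
    (((hN.continuous.pow 2).add hSc).integrable_of_hasCompactSupport
      (hN2s.add hSs)).const_mul _
  have hInt_nonneg : 0 ≤ ∫ x, ∑ k : Fin (d+1), (Wvec N U x k) ^ 2 :=
    integral_nonneg fun x => Finset.sum_nonneg fun k _ => sq_nonneg _
  -- pointwise bound
  have hptb : ∀ x, ∑ j, (a j x * N x ^ 2 + b j x * S x)
      ≤ ((d : ℝ) * M0) * (N x ^ 2 + S x) := by
    intro x
    calc ∑ j, (a j x * N x ^ 2 + b j x * S x) ≤ ∑ _j : Fin d, M0 * (N x ^ 2 + S x) := by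
          refine Finset.sum_le_sum fun j _ => ?_
          rw [mul_add]
          refine add_le_add ?_ ?_
          · refine mul_le_mul_of_nonneg_right ?_ (sq_nonneg _)
            refine (le_abs_self _).trans ((haB j x).trans ?_)
            rw [hM0def]; nlinarith [hK0, hB0.le]
          · refine mul_le_mul_of_nonneg_right ?_ (hS0 x)
            refine (le_abs_self _).trans ((hbB j x).trans ?_)
            rw [hM0def]; nlinarith [hK0, hB0.le]
      _ = ((d : ℝ) * M0) * (N x ^ 2 + S x) := by
          rw [Finset.sum_const, Finset.card_univ, Fintype.card_fin, nsmul_eq_mul]; ring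
  -- main chain
  calc ∑ j : Fin d, ∫ x, dotProduct
          ((matPDeriv j
              (fun y => A0 d (deriv h (n y)) (n y) *
                Amat d (deriv h (n y)) (n y) (u y j) j) x).mulVec (Wvec N U x))
          (Wvec N U x)
      = ∑ j : Fin d, ∫ x, (a j x * N x ^ 2 + 2 * c j x * N x * U x j + b j x * S x) :=
        Finset.sum_congr rfl fun j _ =>
          integral_congr_ae (Filter.Eventually.of_forall fun x => hdot j x)
    _ = ∫ x, ∑ j, (a j x * N x ^ 2 + 2 * c j x * N x * U x j + b j x * S x) :=
        (integral_finset_sum _ fun j _ => int_dot j).symm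
    _ = ∫ x, ((∑ j, (a j x * N x ^ 2 + b j x * S x))
          + 2 * (N x * (inner ℝ (gradient p x) (U x) : ℝ))) := by
        refine integral_congr_ae (Filter.Eventually.of_forall fun x => ?_)
        dsimp only
        rw [hgrad x, Finset.mul_sum, Finset.mul_sum]
        rw [← Finset.sum_add_distrib]
        exact Finset.sum_congr rfl fun j _ => by ring
    _ = (∫ x, ∑ j, (a j x * N x ^ 2 + b j x * S x))
          + ∫ x, 2 * (N x * (inner ℝ (gradient p x) (U x) : ℝ)) :=
        integral_add int_G1 (int_G2.const_mul 2)
    _ ≤ ((d : ℝ) * M0 + 1) * (∫ x, ∑ k : Fin (d + 1), (Wvec N U x k) ^ 2)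
          + 2 * ∫ x, N x * (inner ℝ (gradient p x) (U x) : ℝ) := by
        refine add_le_add ?_ (le_of_eq (integral_const_mul 2 _))
        calc (∫ x, ∑ j, (a j x * N x ^ 2 + b j x * S x))
            ≤ ∫ x, ((d : ℝ) * M0) * (N x ^ 2 + S x) :=
              integral_mono int_G1 int_dom hptb
          _ = ((d : ℝ) * M0) * ∫ x, (N x ^ 2 + S x) := integral_const_mul _ _
          _ = ((d : ℝ) * M0) * ∫ x, ∑ k : Fin (d + 1), (Wvec N U x k) ^ 2 := by
              congr 1
              exact integral_congr_ae (Filter.Eventually.of_forall fun x => (hWk x).symm)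
          _ ≤ ((d : ℝ) * M0 + 1) * ∫ x, ∑ k : Fin (d + 1), (Wvec N U x k) ^ 2 := by
              refine mul_le_mul_of_nonneg_right ?_ hInt_nonneg
              linarith

end
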